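/- For the Glauber exchange dynamics, if y = τ(x,u) is obtained from x by swapping the states of an adjacent pair u = (i,j) with x_i ≠ x_j, then the total energy satisfies E(y) − E(x) = 6 − 2E_u(x); in particular the global energy change depends only on the local energy of the exchanged edge. -/

import Mathlib

open scoped Classical

variable (n₁ n₂ : ℕ) [NeZero n₁] [NeZero n₂]

/-- The set of unordered adjacent pairs (4-neighbour torus edges), each edge
represented once by its canonical orientation (rightward or upward). -/
noncomputable def I4 : Finset ((ZMod n₁ × ZMod n₂) × (ZMod n₁ × ZMod n₂)) :=
  (Finset.univ.image fun c : ZMod n₁ × ZMod n₂ => (c, c + (1, 0))) ∪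
  (Finset.univ.image fun c : ZMod n₁ × ZMod n₂ => (c, c + (0, 1)))

variable {n₁ n₂}

/-- Total energy: number of edges whose endpoints are in equal states. -/
noncomputable def En (x : ZMod n₁ × ZMod n₂ → Bool) : ℕ :=
  ∑ u ∈ I4 n₁ n₂, if x u.1 = x u.2 then 1 else 0

/-- Local energy of the edge `{i,j}`: number of the six edges of `I₄ \ {(i,j)}`
sharing a vertex with `(i,j)` whose endpoints are in equal states. -/
noncomputable def EnLoc (i j : ZMod n₁ × ZMod n₂) (x : ZMod n₁ × ZMod n₂ → Bool) : ℕ :=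
  ∑ u ∈ (I4 n₁ n₂).filter (fun u => (u ≠ (i, j) ∧ u ≠ (j, i)) ∧
      (u.1 = i ∨ u.1 = j ∨ u.2 = i ∨ u.2 = j)),
    if x u.1 = x u.2 then 1 else 0

/-- `τ(x,(i,j))`: the configuration obtained by exchanging the states of `i` and `j`. -/
def swap (x : ZMod n₁ × ZMod n₂ → Bool) (i j : ZMod n₁ × ZMod n₂) :
    ZMod n₁ × ZMod n₂ → Bool :=
  fun c => if c = i then x j else if c = j then x i else x c

/-- 4-neighbour adjacency on the torus. -/
def adjT (p q : ZMod n₁ × ZMod n₂) : Prop :=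
  q = p + (1, 0) ∨ q = p + (0, 1) ∨ q = p + (-1, 0) ∨ q = p + (0, -1)


/-! Swapping the states of `i` and `j` only affects edges with an endpoint in `{i, j}`. The edge
`{i, j}` itself stays disagreeing, and each of the other edges at `i` or `j` has exactly one endpoint
moved, which receives the opposite state, so its agreement indicator flips. Hence
`E(y) = E(x) + #N - 2 E_u(x)` for the set `N` of those edges. Finally `#N = 4 + 4 - 2`: the torus
is 4-regular and, for sides at least 3, the edge `{i, j}` occurs in `I₄` in one orientation only. -/

section EdgeSets

variable {α : Type*}

def agreeCount (S : Finset (α × α)) (x : α → Bool) : ℕ :=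
  ∑ u ∈ S, if x u.1 = x u.2 then 1 else 0

def incidentEdges [DecidableEq α] (S : Finset (α × α)) (v : α) : Finset (α × α) :=
  S.filter fun u => u.1 = v ∨ u.2 = v

def adjacentEdges [DecidableEq α] (S : Finset (α × α)) (i j : α) : Finset (α × α) :=
  S.filter fun u => (u ≠ (i, j) ∧ u ≠ (j, i)) ∧ (u.1 = i ∨ u.1 = j ∨ u.2 = i ∨ u.2 = j)

lemma adjacentEdges_comm [DecidableEq α] (S : Finset (α × α)) (i j : α) :
    adjacentEdges S i j = adjacentEdges S j i :=
  Finset.filter_congr fun _ _ => by tauto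

lemma Bool.eq_iff_not_eq_of_ne {a b : Bool} (h : a ≠ b) (c : Bool) : b = c ↔ ¬a = c := by
  rw [Bool.eq_not_of_ne h.symm, Bool.not_eq]

lemma comp_swap_agree_iff_of_not_adjacent [DecidableEq α] (x : α → Bool) {i j a b : α}
    (h : ¬(((a, b) ≠ (i, j) ∧ (a, b) ≠ (j, i)) ∧ (a = i ∨ a = j ∨ b = i ∨ b = j))) :
    x (Equiv.swap i j a) = x (Equiv.swap i j b) ↔ x a = x b := by
  by_cases hP : a = i ∨ a = j ∨ b = i ∨ b = j
  · simp only [hP, and_true, not_and_or, not_not, Prod.mk.injEq] at h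
    rcases h with ⟨rfl, rfl⟩ | ⟨rfl, rfl⟩ <;> simp [eq_comm]
  · push Not at hP
    rw [Equiv.swap_apply_of_ne_of_ne hP.1 hP.2.1, Equiv.swap_apply_of_ne_of_ne hP.2.2.1 hP.2.2.2]

lemma comp_swap_agree_iff_of_adjacent [DecidableEq α] {x : α → Bool} {i j a b : α}
    (hx : x i ≠ x j) (hab : a ≠ b) (hQ : (a, b) ≠ (i, j) ∧ (a, b) ≠ (j, i))
    (hP : a = i ∨ a = j ∨ b = i ∨ b = j) :
    x (Equiv.swap i j a) = x (Equiv.swap i j b) ↔ ¬x a = x b := by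
  simp only [ne_eq, Prod.mk.injEq] at hQ
  rcases hP with rfl | rfl | rfl | rfl
  · rw [Equiv.swap_apply_left, Equiv.swap_apply_of_ne_of_ne hab.symm (by tauto)]
    exact Bool.eq_iff_not_eq_of_ne hx _
  · rw [Equiv.swap_apply_right, Equiv.swap_apply_of_ne_of_ne (by tauto) hab.symm]
    exact Bool.eq_iff_not_eq_of_ne hx.symm _
  · rw [Equiv.swap_apply_left, Equiv.swap_apply_of_ne_of_ne hab (by tauto), eq_comm (a := x a),
      eq_comm (a := x a)]
    exact Bool.eq_iff_not_eq_of_ne hx _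
  · rw [Equiv.swap_apply_right, Equiv.swap_apply_of_ne_of_ne (by tauto) hab, eq_comm (a := x a),
      eq_comm (a := x a)]
    exact Bool.eq_iff_not_eq_of_ne hx.symm _

theorem agreeCount_comp_swap [DecidableEq α] {S : Finset (α × α)} (hS : ∀ u ∈ S, u.1 ≠ u.2)
    {x : α → Bool} {i j : α} (hx : x i ≠ x j) :
    agreeCount S (x ∘ Equiv.swap i j) + 2 * agreeCount (adjacentEdges S i j) x =
      agreeCount S x + (adjacentEdges S i j).card := by
  set N := adjacentEdges S i j
  have split (y : α → Bool) : agreeCount S y = agreeCount (S \ N) y + agreeCount N y :=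
    (Finset.sum_sdiff (Finset.filter_subset _ _)).symm
  have far : agreeCount (S \ N) (x ∘ Equiv.swap i j) = agreeCount (S \ N) x := by
    refine Finset.sum_congr rfl fun ⟨a, b⟩ hu => ?_
    obtain ⟨huS, hN⟩ := Finset.mem_sdiff.1 hu
    have : ¬(((a, b) ≠ (i, j) ∧ (a, b) ≠ (j, i)) ∧ (a = i ∨ a = j ∨ b = i ∨ b = j)) :=
      fun h => hN (Finset.mem_filter.2 ⟨huS, h⟩)
    simp only [Function.comp_apply, comp_swap_agree_iff_of_not_adjacent x this]
  have near : agreeCount N (x ∘ Equiv.swap i j) + agreeCount N x = N.card := by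
    rw [agreeCount, agreeCount, ← Finset.sum_add_distrib, Finset.card_eq_sum_ones]
    refine Finset.sum_congr rfl fun ⟨a, b⟩ hu => ?_
    obtain ⟨huS, hQ, hP⟩ := Finset.mem_filter.1 hu
    simp only [Function.comp_apply, comp_swap_agree_iff_of_adjacent hx (hS _ huS) hQ hP]
    split_ifs <;> simp_all
  rw [split, split x, far]
  omega

theorem card_adjacentEdges_add_two [DecidableEq α] {S : Finset (α × α)}
    (hS : ∀ u ∈ S, u.1 ≠ u.2) {i j : α} (hij : (i, j) ∈ S) (hji : (j, i) ∉ S) :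
    (adjacentEdges S i j).card + 2 = (incidentEdges S i).card + (incidentEdges S j).card := by
  have union : incidentEdges S i ∪ incidentEdges S j = insert (i, j) (adjacentEdges S i j) := by
    ext ⟨a, b⟩
    simp only [incidentEdges, adjacentEdges, Finset.mem_union, Finset.mem_insert,
      Finset.mem_filter, ne_eq, Prod.mk.injEq]
    grind
  have inter : incidentEdges S i ∩ incidentEdges S j = {(i, j)} := by
    ext ⟨a, b⟩
    simp only [incidentEdges, Finset.mem_inter, Finset.mem_filter, Finset.mem_singleton,
      Prod.mk.injEq]
    have := hS (a, b)
    grind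
  have hN : (i, j) ∉ adjacentEdges S i j := by simp [adjacentEdges]
  rw [← Finset.card_union_add_card_inter, union, inter, Finset.card_insert_of_notMem hN,
    Finset.card_singleton]

end EdgeSets

lemma ZMod.natCast_ne_zero_of_pos_of_lt {n k : ℕ} (hk : 0 < k) (hkn : k < n) :
    (k : ZMod n) ≠ 0 := by
  rw [Ne, ZMod.natCast_eq_zero_iff]
  exact Nat.not_dvd_of_pos_of_lt hk hkn

lemma swap_eq_comp_swap {m₁ m₂ : ℕ} (x : ZMod m₁ × ZMod m₂ → Bool) (i j : ZMod m₁ × ZMod m₂) :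
    swap x i j = x ∘ Equiv.swap i j := by
  funext c
  simp only [swap, Function.comp_apply, Equiv.swap_apply_def]
  split_ifs <;> rfl

lemma En_eq_agreeCount (x : ZMod n₁ × ZMod n₂ → Bool) : En x = agreeCount (I4 n₁ n₂) x := rfl

lemma EnLoc_eq_agreeCount (i j : ZMod n₁ × ZMod n₂) (x : ZMod n₁ × ZMod n₂ → Bool) :
    EnLoc i j x = agreeCount (adjacentEdges (I4 n₁ n₂) i j) x := rfl

lemma mem_I4 {u : (ZMod n₁ × ZMod n₂) × (ZMod n₁ × ZMod n₂)} :
    u ∈ I4 n₁ n₂ ↔ u.2 = u.1 + (1, 0) ∨ u.2 = u.1 + (0, 1) := by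
  obtain ⟨a, b⟩ := u
  simp only [I4, Finset.mem_union, Finset.mem_image, Finset.mem_univ, true_and, Prod.mk.injEq]
  constructor
  · rintro (⟨c, rfl, rfl⟩ | ⟨c, rfl, rfl⟩) <;> simp
  · rintro (rfl | rfl)
    · exact .inl ⟨a, rfl, rfl⟩
    · exact .inr ⟨a, rfl, rfl⟩

lemma adjT.mem_I4_or_swap_mem_I4 {i j : ZMod n₁ × ZMod n₂} (h : adjT i j) :
    (i, j) ∈ I4 n₁ n₂ ∨ (j, i) ∈ I4 n₁ n₂ := by
  simp only [mem_I4]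
  rcases h with rfl | rfl | rfl | rfl <;> simp [Prod.ext_iff, add_assoc]

lemma fst_ne_snd_of_mem_I4 (h₁ : 2 ≤ n₁) (h₂ : 2 ≤ n₂)
    {u : (ZMod n₁ × ZMod n₂) × (ZMod n₁ × ZMod n₂)} (hu : u ∈ I4 n₁ n₂) : u.1 ≠ u.2 := by
  have := ZMod.natCast_ne_zero_of_pos_of_lt one_pos h₁
  have := ZMod.natCast_ne_zero_of_pos_of_lt one_pos h₂
  rcases mem_I4.1 hu with h | h <;> rw [h] <;> simp_all

lemma card_incidentEdges_I4 (h₁ : 2 ≤ n₁) (h₂ : 2 ≤ n₂) (v : ZMod n₁ × ZMod n₂) :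
    (incidentEdges (I4 n₁ n₂) v).card = 4 := by
  have one₁ := ZMod.natCast_ne_zero_of_pos_of_lt one_pos h₁
  have hout : (I4 n₁ n₂).filter (fun u => u.1 = v) = {(v, v + (1, 0)), (v, v + (0, 1))} := by
    ext ⟨a, b⟩
    simp only [Finset.mem_filter, mem_I4, Finset.mem_insert, Finset.mem_singleton, Prod.mk.injEq]
    grind
  have hin : (I4 n₁ n₂).filter (fun u => u.2 = v) = {(v - (1, 0), v), (v - (0, 1), v)} := by
    ext ⟨a, b⟩
    simp only [Finset.mem_filter, mem_I4, Finset.mem_insert, Finset.mem_singleton, Prod.mk.injEq,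
      eq_sub_iff_add_eq]
    grind
  have hdisj :
      Disjoint ((I4 n₁ n₂).filter fun u => u.1 = v) ((I4 n₁ n₂).filter fun u => u.2 = v) :=
    Finset.disjoint_filter.2 fun u hu h h' => fst_ne_snd_of_mem_I4 h₁ h₂ hu (h.trans h'.symm)
  have hsplit : incidentEdges (I4 n₁ n₂) v =
      (I4 n₁ n₂).filter (fun u => u.1 = v) ∪ (I4 n₁ n₂).filter (fun u => u.2 = v) := by
    ext
    simp [incidentEdges, and_or_left]
  rw [hsplit, Finset.card_union_of_disjoint hdisj, hout, hin, Finset.card_pair, Finset.card_pair]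
  all_goals simp_all

lemma swap_not_mem_I4 (h₁ : 3 ≤ n₁) (h₂ : 3 ≤ n₂) {a b : ZMod n₁ × ZMod n₂}
    (hab : (a, b) ∈ I4 n₁ n₂) : (b, a) ∉ I4 n₁ n₂ := by
  have one₁ : (1 : ZMod n₁) ≠ 0 := mod_cast ZMod.natCast_ne_zero_of_pos_of_lt one_pos (by omega)
  have two₁ : (2 : ZMod n₁) ≠ 0 := mod_cast ZMod.natCast_ne_zero_of_pos_of_lt two_pos h₁
  have two₂ : (2 : ZMod n₂) ≠ 0 := mod_cast ZMod.natCast_ne_zero_of_pos_of_lt two_pos h₂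
  simp only [mem_I4] at hab ⊢
  rcases hab with rfl | rfl <;>
    simp [Prod.ext_iff, add_assoc, one_add_one_eq_two, one₁, two₁, two₂]

lemma card_adjacentEdges_I4 (h₁ : 3 ≤ n₁) (h₂ : 3 ≤ n₂) {i j : ZMod n₁ × ZMod n₂}
    (h : adjT i j) : (adjacentEdges (I4 n₁ n₂) i j).card = 6 := by
  have hS : ∀ u ∈ I4 n₁ n₂, u.1 ≠ u.2 := fun _ => fst_ne_snd_of_mem_I4 (by omega) (by omega)
  have deg := card_incidentEdges_I4 (n₁ := n₁) (n₂ := n₂) (by omega) (by omega)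
  rcases h.mem_I4_or_swap_mem_I4 with hij | hji
  · have := card_adjacentEdges_add_two hS hij (swap_not_mem_I4 h₁ h₂ hij)
    rw [deg, deg] at this
    omega
  · have := card_adjacentEdges_add_two hS hji (swap_not_mem_I4 h₁ h₂ hji)
    rw [deg, deg] at this
    rw [adjacentEdges_comm]
    omega

/-- swapping the states of an adjacent pair `u = (i,j)` with
`x_i ≠ x_j` changes the total energy by `E(y) − E(x) = 6 − 2E_u(x)`. -/
theorem energy_change_of_swap
    (n₁ n₂ : ℕ) [NeZero n₁] [NeZero n₂] (h₁ : 3 ≤ n₁) (h₂ : 3 ≤ n₂)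
    (x : ZMod n₁ × ZMod n₂ → Bool) (i j : ZMod n₁ × ZMod n₂)
    (hadj : adjT i j) (hne : x i ≠ x j)
    (y : ZMod n₁ × ZMod n₂ → Bool) (hy : y = swap x i j) :
    (En y : ℤ) - En x = 6 - 2 * EnLoc i j x := by
  have key := agreeCount_comp_swap (fun _ => fst_ne_snd_of_mem_I4 (by omega) (by omega)) hne
  rw [← swap_eq_comp_swap, ← hy, card_adjacentEdges_I4 h₁ h₂ hadj, ← En_eq_agreeCount,
    ← En_eq_agreeCount, ← EnLoc_eq_agreeCount] at key
  omega
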